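/- For 0 < γ < 1 and fixed λ₁ > 0, setting ζ = λ₁^{1/(1-γ)} γ^{γ/(1-γ)} (1-γ), the minimum over μ ≥ 0 of μ^{1-1/γ}·t + ζμ equals λ₁ t^{γ} for every t ≥ 0, and the minimizer is μ* = ((1-γ)/(γζ))^{γ} t^{γ} when t > 0. -/

import Mathlib

/-!
Both terms of `μ ^ (1 - 1/γ) * t + ζ * μ` are positive, and the weights `γ`, `1 - γ` are chosen so
that the weighted geometric mean `(μ ^ (1 - 1/γ) * t) ^ γ * (ζ * μ) ^ (1 - γ) = ζ ^ (1 - γ) * t ^ γ`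
does not depend on `μ`; weighted AM-GM then gives a lower bound independent of `μ`, and `ζ` is
normalised so that this bound is `λ₁ t ^ γ`. Equality in AM-GM holds when the two terms are in the
ratio `γ : 1 - γ`, which is what `μ*` achieves.
-/

open Real

namespace BridgePenalty

variable {γ : ℝ}

theorem rpow_mul_rpow_one_sub_le {a b : ℝ} (hγ0 : 0 < γ) (hγ1 : γ < 1) (ha : 0 ≤ a) (hb : 0 ≤ b) :
    a ^ γ * b ^ (1 - γ) ≤ γ ^ γ * (1 - γ) ^ (1 - γ) * (a + b) := by
  have h1γ : 0 < 1 - γ := by linarith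
  have amgm := geom_mean_le_arith_mean2_weighted hγ0.le h1γ.le (div_nonneg ha hγ0.le)
    (div_nonneg hb h1γ.le) (by ring)
  rw [div_rpow ha hγ0.le, div_rpow hb h1γ.le] at amgm
  calc a ^ γ * b ^ (1 - γ)
      = γ ^ γ * (1 - γ) ^ (1 - γ) * (a ^ γ / γ ^ γ * (b ^ (1 - γ) / (1 - γ) ^ (1 - γ))) := by
        field_simp
    _ ≤ γ ^ γ * (1 - γ) ^ (1 - γ) * (a + b) := by
        gcongr
        calc _ ≤ γ * (a / γ) + (1 - γ) * (b / (1 - γ)) := amgm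
          _ = a + b := by field_simp

theorem rpow_mul_rpow_one_sub_eq_of_pos {ζ μ t : ℝ} (hγ0 : 0 < γ) (hμ : 0 < μ) (ht : 0 < t)
    (hζ : 0 < ζ) :
    (μ ^ (1 - 1 / γ) * t) ^ γ * (ζ * μ) ^ (1 - γ) = ζ ^ (1 - γ) * t ^ γ := by
  have hexp : (1 - 1 / γ) * γ = γ - 1 := by field_simp
  have hμ_cancel : μ ^ (γ - 1) * μ ^ (1 - γ) = 1 := by
    rw [← rpow_add hμ]; norm_num
  rw [mul_rpow (by positivity) ht.le, mul_rpow hζ.le hμ.le, ← rpow_mul hμ.le, hexp]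
  linear_combination (ζ ^ (1 - γ) * t ^ γ) * hμ_cancel

theorem objective_critical_point_eq_rpow {ζ t : ℝ} (hγ0 : 0 < γ) (hγ1 : γ < 1) (ht : 0 < t)
    (hζ : 0 < ζ) :
    (((1 - γ) / (γ * ζ)) ^ γ * t ^ γ) ^ (1 - 1 / γ) * t + ζ * (((1 - γ) / (γ * ζ)) ^ γ * t ^ γ)
      = ((1 - γ) / (γ * ζ)) ^ (γ - 1) * t ^ γ / γ := by
  set D := (1 - γ) / (γ * ζ)
  have hD : 0 < D := div_pos (by linarith) (by positivity)
  have hexp : γ * (1 - 1 / γ) = γ - 1 := by field_simp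
  have hDγ : D ^ γ = D * D ^ (γ - 1) := by
    rw [← rpow_one_add' hD.le (by linarith)]; ring_nf
  have htγ : t ^ (γ - 1) * t = t ^ γ := by
    rw [rpow_sub_one ht.ne']; field_simp
  have hζD : ζ * D = (1 - γ) / γ := by
    simp only [D]; field_simp
  rw [mul_rpow (by positivity) (by positivity), ← rpow_mul hD.le, ← rpow_mul ht.le, hexp,
    mul_assoc, htγ, hDγ,
    show ζ * (D * D ^ (γ - 1) * t ^ γ) = ζ * D * (D ^ (γ - 1) * t ^ γ) by ring, hζD]
  field_simp
  ring

variable {lam₁ ζ : ℝ} (hγ0 : 0 < γ) (hγ1 : γ < 1) (hlam : 0 < lam₁)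
  (hζ : ζ = lam₁ ^ (1 / (1 - γ)) * γ ^ (γ / (1 - γ)) * (1 - γ))
include hγ0 hγ1 hlam hζ

theorem zeta_pos : 0 < ζ := by
  have h1γ : 0 < 1 - γ := by linarith
  rw [hζ]; positivity

theorem zeta_rpow_one_sub : ζ ^ (1 - γ) = lam₁ * γ ^ γ * (1 - γ) ^ (1 - γ) := by
  have h1γ : 0 < 1 - γ := by linarith
  rw [hζ, mul_rpow (by positivity) h1γ.le, mul_rpow (by positivity) (by positivity),
    ← rpow_mul hlam.le, ← rpow_mul hγ0.le, one_div_mul_cancel h1γ.ne', div_mul_cancel₀ _ h1γ.ne',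
    rpow_one]

theorem critical_ratio_rpow : ((1 - γ) / (γ * ζ)) ^ (γ - 1) = γ * lam₁ := by
  have h1γ : 0 < 1 - γ := by linarith
  have hζpos := zeta_pos hγ0 hγ1 hlam hζ
  have hγγ : γ ^ (1 - γ) * γ ^ γ = γ := by
    rw [← rpow_add hγ0]; norm_num
  rw [show γ - 1 = -(1 - γ) by ring, rpow_neg (by positivity), div_rpow h1γ.le (by positivity),
    mul_rpow hγ0.le hζpos.le, zeta_rpow_one_sub hγ0 hγ1 hlam hζ,
    show γ ^ (1 - γ) * (lam₁ * γ ^ γ * (1 - γ) ^ (1 - γ))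
      = γ ^ (1 - γ) * γ ^ γ * lam₁ * (1 - γ) ^ (1 - γ) by ring, hγγ]
  field_simp

theorem penalty_le_objective {t μ : ℝ} (ht : 0 < t) (hμ : 0 < μ) :
    lam₁ * t ^ γ ≤ μ ^ (1 - 1 / γ) * t + ζ * μ := by
  have h1γ : 0 < 1 - γ := by linarith
  have hζpos := zeta_pos hγ0 hγ1 hlam hζ
  have hweight : 0 < γ ^ γ * (1 - γ) ^ (1 - γ) := by positivity
  have amgm := rpow_mul_rpow_one_sub_le hγ0 hγ1 (by positivity : 0 ≤ μ ^ (1 - 1 / γ) * t)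
    (by positivity : 0 ≤ ζ * μ)
  rw [rpow_mul_rpow_one_sub_eq_of_pos hγ0 hμ ht hζpos, zeta_rpow_one_sub hγ0 hγ1 hlam hζ] at amgm
  exact le_of_mul_le_mul_left (by linarith) hweight

theorem objective_critical_point_eq {t : ℝ} (ht : 0 < t) :
    (((1 - γ) / (γ * ζ)) ^ γ * t ^ γ) ^ (1 - 1 / γ) * t + ζ * (((1 - γ) / (γ * ζ)) ^ γ * t ^ γ)
      = lam₁ * t ^ γ := by
  rw [objective_critical_point_eq_rpow hγ0 hγ1 ht (zeta_pos hγ0 hγ1 hlam hζ),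
    critical_ratio_rpow hγ0 hγ1 hlam hζ]
  field_simp

end BridgePenalty

open BridgePenalty in
/-- Variational representation of the bridge penalty: for 0 < γ < 1, λ₁ > 0 and
ζ = λ₁^{1/(1-γ)} γ^{γ/(1-γ)} (1-γ), the minimum over μ of μ^{1-1/γ} t + ζ μ equals
λ₁ t^γ, attained at μ* = ((1-γ)/(γζ))^γ t^γ for t > 0; at t = 0 (with the convention
0^{1-1/γ}·0 = 0) the minimum over μ ≥ 0 of ζμ is λ₁·0^γ = 0. -/
theorem stmt2 (γ lam₁ : ℝ) (hγ0 : 0 < γ) (hγ1 : γ < 1) (hlam : 0 < lam₁)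
    (ζ : ℝ) (hζ : ζ = lam₁ ^ (1 / (1 - γ)) * γ ^ (γ / (1 - γ)) * (1 - γ)) :
    (∀ t : ℝ, 0 < t →
      (∀ μ : ℝ, 0 < μ → lam₁ * t ^ γ ≤ μ ^ (1 - 1 / γ) * t + ζ * μ) ∧
      (((1 - γ) / (γ * ζ)) ^ γ * t ^ γ) ^ (1 - 1 / γ) * t
        + ζ * (((1 - γ) / (γ * ζ)) ^ γ * t ^ γ) = lam₁ * t ^ γ) ∧
    IsLeast ((fun μ : ℝ => ζ * μ) '' Set.Ici 0) (lam₁ * (0 : ℝ) ^ γ) := by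
  refine ⟨fun t ht => ⟨fun μ hμ => penalty_le_objective hγ0 hγ1 hlam hζ ht hμ,
    objective_critical_point_eq hγ0 hγ1 hlam hζ ht⟩, ?_⟩
  rw [zero_rpow hγ0.ne', mul_zero]
  refine ⟨⟨0, Set.self_mem_Ici, mul_zero ζ⟩, ?_⟩
  rintro _ ⟨μ, hμ, rfl⟩
  exact mul_nonneg (zeta_pos hγ0 hγ1 hlam hζ).le hμ
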